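/- arXiv:cond-mat/0104295 — 2 statements merged into one kernel-verified Lean document; each statement's English description precedes it below -/
import Mathlib

section
/- If X is a real-valued random variable on a probability space (Ω,𝒜,P) with E[X⁻] < ∞, then for any α ∈ (0,1) and any ε > 0 with α + ε < 1, one has TM_{α+ε}(X) ≥ TM_α(X), and equivalently ES_{α+ε}(X) ≤ ES_α(X); that is, Expected Shortfall is non-increasing in the confidence level. -/
open MeasureTheory ProbabilityTheory Filter
open scoped Classical

noncomputable section

variable {Ω : Type*} [MeasurableSpace Ω]

/-- Lower α-quantile: inf {x | P[X ≤ x] ≥ α}. -/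
def lowerQuantile (P : Measure Ω) (X : Ω → ℝ) (α : ℝ) : ℝ :=
  sInf {x : ℝ | α ≤ (P {ω | X ω ≤ x}).toReal}

/-- Upper α-quantile: inf {x | P[X ≤ x] > α}. -/
def upperQuantile (P : Measure Ω) (X : Ω → ℝ) (α : ℝ) : ℝ :=
  sInf {x : ℝ | α < (P {ω | X ω ≤ x}).toReal}

/-- α-tail mean. -/
def tailMean (P : Measure Ω) (X : Ω → ℝ) (α : ℝ) : ℝ :=
  α⁻¹ * ((∫ ω in {ω | X ω ≤ lowerQuantile P X α}, X ω ∂P)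
    + lowerQuantile P X α * (α - (P {ω | X ω ≤ lowerQuantile P X α}).toReal))

/-- Expected Shortfall. -/
def ES (P : Measure Ω) (X : Ω → ℝ) (α : ℝ) : ℝ := - tailMean P X α

/-- Conditional expectation given an event: E[X | A] = E[X·1_A] / P[A]. -/
def condExpEvent (P : Measure Ω) (X : Ω → ℝ) (A : Set Ω) : ℝ :=
  (∫ ω in A, X ω ∂P) / (P A).toReal

/-- Lower tail conditional expectation. -/
def TCElow (P : Measure Ω) (X : Ω → ℝ) (α : ℝ) : ℝ :=
  - condExpEvent P X {ω | X ω ≤ lowerQuantile P X α}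

/-- Upper tail conditional expectation. -/
def TCEup (P : Measure Ω) (X : Ω → ℝ) (α : ℝ) : ℝ :=
  - condExpEvent P X {ω | X ω ≤ upperQuantile P X α}

/-- Worst conditional expectation. -/
def WCE (P : Measure Ω) (X : Ω → ℝ) (α : ℝ) : ℝ :=
  - sInf {y : ℝ | ∃ A : Set Ω, MeasurableSet A ∧ α < (P A).toReal ∧ y = condExpEvent P X A}

/-- Conditional value-at-risk. -/
def CVaR (P : Measure Ω) (X : Ω → ℝ) (α : ℝ) : ℝ :=
  sInf {y : ℝ | ∃ s : ℝ, y = (∫ ω, max (-(X ω - s)) 0 ∂P) / α - s}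

/-- Modified indicator 1^{(α)}_{X ≤ x}. -/
def modInd (P : Measure Ω) (X : Ω → ℝ) (α x : ℝ) (ω : Ω) : ℝ :=
  if P {a | X a = x} = 0 then Set.indicator {a | X a ≤ x} (fun _ => (1 : ℝ)) ω
  else Set.indicator {a | X a ≤ x} (fun _ => (1 : ℝ)) ω
    + ((α - (P {a | X a ≤ x}).toReal) / (P {a | X a = x}).toReal)
      * Set.indicator {a | X a = x} (fun _ => (1 : ℝ)) ω

/-- Sum of the k smallest entries of (X 0 ω, ..., X (n-1) ω). -/
def tailSum (Xs : ℕ → Ω → ℝ) (n k : ℕ) (ω : Ω) : ℝ :=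
  ((List.insertionSort (· ≤ ·) (List.ofFn fun i : Fin n => Xs i ω)).take k).sum

/-! Write `L(x) = E[(x - X)⁺]`. Then `TM_β(X) = q_β - L(q_β) / β`, and since
`P[X < q_β] ≤ β ≤ P[X ≤ q_β]`, the quantile `q_β` maximises the concave function
`x ↦ β x - L(x)` (Rockafellar–Uryasev). Hence `TM_β(X) = max_x (x - L(x) / β)`, a supremum of
functions of `β` that are non-decreasing because `L ≥ 0`. -/

section Quantile

open Topology

variable {β : ℝ} (μ : Measure ℝ)

lemma bddBelow_setOf_le_cdf (hβ : 0 < β) : BddBelow {x | β ≤ cdf μ x} := by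
  obtain ⟨y, hy⟩ :=
    ((tendsto_cdf_atBot μ).eventually (eventually_lt_nhds hβ)).exists_forall_of_atBot
  exact ⟨y, fun x hx => le_of_not_gt fun hxy => (hy x hxy.le).not_ge hx⟩

lemma le_cdf_sInf_setOf_le_cdf (hβ : β < 1) :
    β ≤ cdf μ (sInf {x | β ≤ cdf μ x}) := by
  set q := sInf {x | β ≤ cdf μ x}
  have hne : {x | β ≤ cdf μ x}.Nonempty :=
    ((tendsto_cdf_atTop μ).eventually (eventually_ge_nhds hβ)).exists
  have hright : ∀ᶠ y in 𝓝[>] q, β ≤ cdf μ y := by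
    filter_upwards [self_mem_nhdsWithin] with y hy
    obtain ⟨x, hx, hxy⟩ := exists_lt_of_csInf_lt hne hy
    exact hx.trans (monotone_cdf μ hxy.le)
  exact ge_of_tendsto (((cdf μ).right_continuous q).mono Set.Ioi_subset_Ici_self) hright

lemma measureReal_Iio_sInf_setOf_le_cdf_le [IsProbabilityMeasure μ] (hβ : 0 < β) :
    μ.real (Set.Iio (sInf {x | β ≤ cdf μ x})) ≤ β := by
  set q := sInf {x | β ≤ cdf μ x}
  have hleft : ∀ᶠ y in 𝓝[<] q, cdf μ y ≤ β := by
    filter_upwards [self_mem_nhdsWithin] with y hy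
    exact le_of_not_ge
      (notMem_of_lt_csInf (s := {x | β ≤ cdf μ x}) hy (bddBelow_setOf_le_cdf μ hβ))
  have hlim := le_of_tendsto ((monotone_cdf μ).tendsto_leftLim q) hleft
  rw [measureReal_def, ← measure_cdf μ, (cdf μ).measure_Iio (tendsto_cdf_atBot μ), sub_zero,
    ENNReal.toReal_ofReal']
  exact max_le hlim hβ.le

end Quantile

section RandomVariable

variable {P : Measure Ω} {X : Ω → ℝ} {β : ℝ}

lemma cdf_map_apply [IsProbabilityMeasure P] (hX : Measurable X) (x : ℝ) :
    cdf (P.map X) x = (P {ω | X ω ≤ x}).toReal := by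
  have := Measure.isProbabilityMeasure_map (μ := P) hX.aemeasurable
  rw [cdf_eq_real, map_measureReal_apply hX measurableSet_Iic, measureReal_def]
  rfl

lemma lowerQuantile_eq_sInf_cdf [IsProbabilityMeasure P] (hX : Measurable X) :
    lowerQuantile P X β = sInf {x | β ≤ cdf (P.map X) x} := by
  simp only [lowerQuantile, cdf_map_apply hX]

lemma le_measure_le_lowerQuantile [IsProbabilityMeasure P] (hX : Measurable X) (hβ : β < 1) :
    β ≤ (P {ω | X ω ≤ lowerQuantile P X β}).toReal := by
  rw [← cdf_map_apply hX, lowerQuantile_eq_sInf_cdf hX]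
  exact le_cdf_sInf_setOf_le_cdf _ hβ

lemma measure_lt_lowerQuantile_le [IsProbabilityMeasure P] (hX : Measurable X) (hβ : 0 < β) :
    (P {ω | X ω < lowerQuantile P X β}).toReal ≤ β := by
  have := Measure.isProbabilityMeasure_map (μ := P) hX.aemeasurable
  have := measureReal_Iio_sInf_setOf_le_cdf_le (P.map X) hβ
  rwa [← lowerQuantile_eq_sInf_cdf hX, map_measureReal_apply hX measurableSet_Iio,
    measureReal_def] at this

def lowerPartialMoment (P : Measure Ω) (X : Ω → ℝ) (x : ℝ) : ℝ :=
  ∫ ω, max (x - X ω) 0 ∂P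

lemma lowerPartialMoment_nonneg (x : ℝ) : 0 ≤ lowerPartialMoment P X x :=
  integral_nonneg fun _ => le_max_right _ _

lemma integrable_max_sub_zero [IsFiniteMeasure P] (hX : Measurable X)
    (hXint : Integrable (fun ω => max (-(X ω)) 0) P) (x : ℝ) :
    Integrable (fun ω => max (x - X ω) 0) P := by
  refine (hXint.add (integrable_const (max x 0))).mono' (by fun_prop) (ae_of_all _ fun ω => ?_)
  rw [Real.norm_of_nonneg (le_max_right _ _)]
  simp only [Pi.add_apply]
  exact max_le (by linarith [le_max_left (-(X ω)) 0, le_max_left x 0]) (by positivity)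

lemma setIntegral_le_eq_sub_lowerPartialMoment [IsFiniteMeasure P] (hX : Measurable X)
    (hXint : Integrable (fun ω => max (-(X ω)) 0) P) (x : ℝ) :
    ∫ ω in {ω | X ω ≤ x}, X ω ∂P = x * (P {ω | X ω ≤ x}).toReal - lowerPartialMoment P X x := by
  have hS : MeasurableSet {ω | X ω ≤ x} := hX measurableSet_Iic
  have hpt : {ω | X ω ≤ x}.indicator X
      = fun ω => {ω | X ω ≤ x}.indicator (fun _ => x) ω - max (x - X ω) 0 := by
    ext ω
    by_cases h : X ω ≤ x
    · simp [Set.indicator_of_mem (show ω ∈ {ω | X ω ≤ x} from h), max_eq_left (sub_nonneg.2 h)]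
    · have h' : x - X ω ≤ 0 := by linarith
      simp [Set.indicator_of_notMem (show ω ∉ {ω | X ω ≤ x} from h), max_eq_right h']
  rw [← integral_indicator hS, hpt, lowerPartialMoment,
    integral_sub ((integrable_const x).indicator hS) (integrable_max_sub_zero hX hXint x),
    integral_indicator_const _ hS, measureReal_def, smul_eq_mul, mul_comm]

end RandomVariable

section RockafellarUryasev

variable {P : Measure Ω} [IsFiniteMeasure P] {X : Ω → ℝ} {β : ℝ}

lemma measure_mul_le_lowerPartialMoment_sub (hX : Measurable X)
    (hXint : Integrable (fun ω => max (-(X ω)) 0) P) {S : Set Ω} (hS : MeasurableSet S) {x q : ℝ}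
    (h : ∀ ω, S.indicator (fun _ => x - q) ω ≤ max (x - X ω) 0 - max (q - X ω) 0) :
    (P S).toReal * (x - q) ≤ lowerPartialMoment P X x - lowerPartialMoment P X q := by
  rw [lowerPartialMoment, lowerPartialMoment, ← integral_sub (integrable_max_sub_zero hX hXint x)
    (integrable_max_sub_zero hX hXint q), ← smul_eq_mul, ← measureReal_def,
    ← integral_indicator_const _ hS]
  exact integral_mono ((integrable_const _).indicator hS)
    ((integrable_max_sub_zero hX hXint x).sub (integrable_max_sub_zero hX hXint q)) h

lemma mul_sub_lowerPartialMoment_le (hX : Measurable X)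
    (hXint : Integrable (fun ω => max (-(X ω)) 0) P) {q : ℝ}
    (hlt : (P {ω | X ω < q}).toReal ≤ β) (hle : β ≤ (P {ω | X ω ≤ q}).toReal) (x : ℝ) :
    β * x - lowerPartialMoment P X x ≤ β * q - lowerPartialMoment P X q := by
  suffices β * (x - q) ≤ lowerPartialMoment P X x - lowerPartialMoment P X q by linarith
  rcases le_total q x with hqx | hxq
  · refine (mul_le_mul_of_nonneg_right hle (sub_nonneg.2 hqx)).trans
      (measure_mul_le_lowerPartialMoment_sub hX hXint (measurableSet_le hX measurable_const)
        fun ω => ?_)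
    simp only [Set.indicator_apply, Set.mem_ofPred_eq]
    split_ifs with hω
    · rw [max_eq_left (sub_nonneg.2 (le_trans hω hqx)), max_eq_left (sub_nonneg.2 hω)]
      linarith
    · rw [max_eq_right (show q - X ω ≤ 0 by linarith [not_le.1 hω])]
      linarith [le_max_right (x - X ω) 0]
  · refine (mul_le_mul_of_nonpos_right hlt (sub_nonpos.2 hxq)).trans
      (measure_mul_le_lowerPartialMoment_sub hX hXint (measurableSet_lt hX measurable_const)
        fun ω => ?_)
    simp only [Set.indicator_apply, Set.mem_ofPred_eq]
    split_ifs with hω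
    · rw [max_eq_left (sub_nonneg.2 (le_of_lt hω))]
      linarith [le_max_left (x - X ω) 0]
    · rw [max_eq_right (show q - X ω ≤ 0 by linarith [not_lt.1 hω]),
        max_eq_right (show x - X ω ≤ 0 by linarith [not_lt.1 hω])]
      norm_num

lemma tailMean_eq (hX : Measurable X) (hXint : Integrable (fun ω => max (-(X ω)) 0) P)
    (hβ : β ≠ 0) :
    tailMean P X β = lowerQuantile P X β - β⁻¹ * lowerPartialMoment P X (lowerQuantile P X β) := by
  rw [tailMean, setIntegral_le_eq_sub_lowerPartialMoment hX hXint]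
  field_simp
  ring

end RockafellarUryasev

lemma sub_inv_mul_lowerPartialMoment_le_tailMean {P : Measure Ω} [IsProbabilityMeasure P]
    {X : Ω → ℝ} {β : ℝ} (hX : Measurable X) (hXint : Integrable (fun ω => max (-(X ω)) 0) P)
    (hβ₀ : 0 < β) (hβ₁ : β < 1) (x : ℝ) :
    x - β⁻¹ * lowerPartialMoment P X x ≤ tailMean P X β := by
  have hmax := mul_sub_lowerPartialMoment_le hX hXint (measure_lt_lowerQuantile_le hX hβ₀)
    (le_measure_le_lowerQuantile hX hβ₁) x
  calc x - β⁻¹ * lowerPartialMoment P X x = β⁻¹ * (β * x - lowerPartialMoment P X x) := by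
        field_simp
    _ ≤ β⁻¹ * (β * lowerQuantile P X β - lowerPartialMoment P X (lowerQuantile P X β)) := by
        gcongr
    _ = tailMean P X β := by
        rw [tailMean_eq hX hXint hβ₀.ne']
        field_simp

/-- Monotonicity of tail mean and Expected Shortfall in the level. -/
theorem es_monotone (P : Measure Ω) [IsProbabilityMeasure P]
    (X : Ω → ℝ) (hX : Measurable X)
    (hXint : Integrable (fun ω => max (-(X ω)) 0) P)
    (α ε : ℝ) (hα : α ∈ Set.Ioo (0:ℝ) 1) (hε : 0 < ε) (hαε : α + ε < 1) :
    tailMean P X α ≤ tailMean P X (α + ε) ∧ ES P X (α + ε) ≤ ES P X α := by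
  obtain ⟨hα₀, -⟩ := hα
  set q := lowerQuantile P X α
  have hmono : tailMean P X α ≤ tailMean P X (α + ε) :=
    calc tailMean P X α = q - α⁻¹ * lowerPartialMoment P X q := tailMean_eq hX hXint hα₀.ne'
      _ ≤ q - (α + ε)⁻¹ * lowerPartialMoment P X q := by
          gcongr
          · exact lowerPartialMoment_nonneg q
          · linarith
      _ ≤ tailMean P X (α + ε) :=
          sub_inv_mul_lowerPartialMoment_le_tailMean hX hXint (by positivity) hαε q
  exact ⟨hmono, neg_le_neg hmono⟩

end
end

section
/- Let X be a real-valued random variable on a probability space (Ω,𝒜,P) with E[X⁻] < ∞ and let α ∈ (0,1). Then the modified indicator function at the lower α-quantile satisfies: (i) 0 ≤ 1^{(α)}_{X ≤ x_{(α)}} ≤ 1 pointwise; (ii) E[1^{(α)}_{X ≤ x_{(α)}}] = α; (iii) α⁻¹ · E[X · 1^{(α)}_{X ≤ x_{(α)}}] = TM_α(X). -/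
open MeasureTheory ProbabilityTheory Filter
open scoped Classical

noncomputable section

variable {Ω : Type*} [MeasurableSpace Ω]

/-!
The lower `α`-quantile `q` satisfies `P[X < q] ≤ α ≤ P[X ≤ q]`; the second inequality comes from
the right-continuity of the distribution function. At any such `q` the modified indicator equals
`1_{X ≤ q} + c • 1_{X = q}` with `c * P[X = q] = α - P[X ≤ q]` and `c ∈ [-1, 0]` (when the atom
`{X = q}` is null the two inequalities force `P[X ≤ q] = α`, and `c = 0`). Hence it only takes the
values `0`, `1` and `1 + c`, its mean is `α`, and, since `X = q` on the atom, the mean of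
`X • 1^{(α)}_{X ≤ q}` is `E[X 1_{X ≤ q}] + q (α - P[X ≤ q])`, which is `α · TM_α(X)`.
-/

open Set Topology

namespace StieltjesFunction

variable (F : StieltjesFunction ℝ) {α : ℝ}

lemma nonempty_setOf_le (hF : Tendsto F atTop (𝓝 1)) (hα : α < 1) :
    {x | α ≤ F x}.Nonempty :=
  ((hF.eventually (lt_mem_nhds hα)).exists).imp fun _ hx => hx.le

lemma bddBelow_setOf_le (hF : Tendsto F atBot (𝓝 0)) (hα : 0 < α) :
    BddBelow {x | α ≤ F x} := by
  obtain ⟨x₀, hx₀⟩ := eventually_atBot.mp (hF.eventually (gt_mem_nhds hα))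
  exact ⟨x₀, fun x hx => le_of_not_ge fun hxx₀ => (hx₀ x hxx₀).not_ge hx⟩

lemma le_apply_sInf_setOf_le (hF : Tendsto F atTop (𝓝 1)) (hα : α < 1) :
    α ≤ F (sInf {x | α ≤ F x}) := by
  set q := sInf {x | α ≤ F x}
  have h_right : ∀ x ∈ Ioi q, α ≤ F x := fun x hx => by
    obtain ⟨s, hs, hsx⟩ := exists_lt_of_csInf_lt (F.nonempty_setOf_le hF hα) hx
    exact hs.trans (F.mono hsx.le)
  exact ge_of_tendsto ((F.right_continuous q).mono Ioi_subset_Ici_self)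
    (eventually_nhdsWithin_of_forall h_right)

lemma leftLim_sInf_setOf_le_le (hF : Tendsto F atBot (𝓝 0)) (hα : 0 < α) :
    Function.leftLim F (sInf {x | α ≤ F x}) ≤ α := by
  have h_left : ∀ x ∈ Iio (sInf {x | α ≤ F x}), F x ≤ α := fun x hx =>
    (not_le.mp <| notMem_of_lt_csInf (s := {x | α ≤ F x}) hx (F.bddBelow_setOf_le hF hα)).le
  exact le_of_tendsto (F.mono.tendsto_leftLim _) (eventually_nhdsWithin_of_forall h_left)

end StieltjesFunction

section Quantile

variable {P : Measure Ω} [IsProbabilityMeasure P] {X : Ω → ℝ} {α : ℝ}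

lemma measureReal_le_eq_cdf_map (hX : Measurable X) (x : ℝ) :
    P.real {ω | X ω ≤ x} = cdf (P.map X) x := by
  have := Measure.isProbabilityMeasure_map (μ := P) hX.aemeasurable
  rw [cdf_eq_real, map_measureReal_apply hX measurableSet_Iic]
  rfl

lemma measureReal_lt_eq_leftLim_cdf_map (hX : Measurable X) (x : ℝ) :
    P.real {ω | X ω < x} = Function.leftLim (cdf (P.map X)) x := by
  have h_nonneg : 0 ≤ Function.leftLim (cdf (P.map X)) x :=
    (cdf_nonneg _ _).trans ((monotone_cdf _).le_leftLim (sub_one_lt x))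
  have := Measure.isProbabilityMeasure_map (μ := P) hX.aemeasurable
  change P.real (X ⁻¹' Iio x) = _
  have h_Iio := (cdf (P.map X)).measure_Iio (tendsto_cdf_atBot _) x
  rw [measure_cdf, sub_zero] at h_Iio
  rw [← map_measureReal_apply hX measurableSet_Iio, measureReal_def, h_Iio,
    ENNReal.toReal_ofReal h_nonneg]

lemma lowerQuantile_eq_sInf_cdf_map (hX : Measurable X) :
    lowerQuantile P X α = sInf {x | α ≤ cdf (P.map X) x} := by
  simp only [lowerQuantile, ← measureReal_def, measureReal_le_eq_cdf_map hX]

lemma le_measureReal_le_lowerQuantile (hX : Measurable X) (hα : α < 1) :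
    α ≤ P.real {ω | X ω ≤ lowerQuantile P X α} := by
  rw [measureReal_le_eq_cdf_map hX, lowerQuantile_eq_sInf_cdf_map hX]
  exact (cdf (P.map X)).le_apply_sInf_setOf_le (tendsto_cdf_atTop _) hα

lemma measureReal_lt_lowerQuantile_le (hX : Measurable X) (hα : 0 < α) :
    P.real {ω | X ω < lowerQuantile P X α} ≤ α := by
  rw [measureReal_lt_eq_leftLim_cdf_map hX, lowerQuantile_eq_sInf_cdf_map hX]
  exact (cdf (P.map X)).leftLim_sInf_setOf_le_le (tendsto_cdf_atBot _) hα

end Quantile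

section ModifiedIndicator

variable {P : Measure Ω} [IsFiniteMeasure P] {X : Ω → ℝ} {α x : ℝ}

lemma integrableOn_setOf_le_of_integrable_negPart (hX : Measurable X)
    (hneg : Integrable (fun ω => max (-(X ω)) 0) P) (x : ℝ) :
    IntegrableOn X {ω | X ω ≤ x} P := by
  have h_bound : ∀ ω ∈ {ω | X ω ≤ x}, ‖X ω‖ ≤ max (-(X ω)) 0 + |x| := fun ω hω =>
    abs_le.mpr ⟨by linarith [le_max_left (-(X ω)) 0, abs_nonneg x],
      by linarith [le_max_right (-(X ω)) 0, le_abs_self x, show X ω ≤ x from hω]⟩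
  exact (hneg.add (integrable_const |x|)).integrableOn.mono' hX.aestronglyMeasurable.restrict
    (ae_restrict_of_forall_mem (measurableSet_le hX measurable_const) h_bound)

lemma measureReal_le_eq_lt_add_eq (hX : Measurable X) (x : ℝ) :
    P.real {ω | X ω ≤ x} = P.real {ω | X ω < x} + P.real {ω | X ω = x} := by
  have h_union : {ω | X ω ≤ x} = {ω | X ω < x} ∪ {ω | X ω = x} := by
    ext ω
    exact le_iff_lt_or_eq (a := X ω)
  rw [h_union, measureReal_union (fun _ h_lt h_eq _ hω => (h_lt hω).ne (h_eq hω))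
    (measurableSet_eq_fun hX measurable_const)]

lemma exists_modInd_eq_indicator_add (hX : Measurable X)
    (hlt : P.real {ω | X ω < x} ≤ α) (hle : α ≤ P.real {ω | X ω ≤ x}) :
    ∃ c ∈ Icc (-1 : ℝ) 0, c * P.real {ω | X ω = x} = α - P.real {ω | X ω ≤ x} ∧
      ∀ ω, modInd P X α x ω =
        {ω | X ω ≤ x}.indicator (fun _ => 1) ω + c * {ω | X ω = x}.indicator (fun _ => 1) ω := by
  have h_split := measureReal_le_eq_lt_add_eq (P := P) hX x
  by_cases h_atom : P {ω | X ω = x} = 0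
  · have h_atom_real : P.real {ω | X ω = x} = 0 := by simp [measureReal_def, h_atom]
    refine ⟨0, by simp, by linarith, fun ω => ?_⟩
    simp only [modInd, if_pos h_atom, zero_mul, add_zero]
  · have h_pos : 0 < P.real {ω | X ω = x} := ENNReal.toReal_pos h_atom (measure_ne_top _ _)
    refine ⟨(α - P.real {ω | X ω ≤ x}) / P.real {ω | X ω = x}, ⟨?_, ?_⟩, ?_, ?_⟩
    · rw [le_div_iff₀ h_pos]
      linarith
    · exact div_nonpos_of_nonpos_of_nonneg (by linarith) h_pos.le
    · exact div_mul_cancel₀ _ h_pos.ne'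
    · intro ω
      simp only [modInd, if_neg h_atom, measureReal_def]

lemma modInd_mem_Icc (hX : Measurable X)
    (hlt : P.real {ω | X ω < x} ≤ α) (hle : α ≤ P.real {ω | X ω ≤ x}) (ω : Ω) :
    modInd P X α x ω ∈ Icc 0 1 := by
  obtain ⟨c, ⟨hc₁, hc₀⟩, -, h_eq⟩ := exists_modInd_eq_indicator_add hX hlt hle
  rw [h_eq ω]
  rcases lt_trichotomy (X ω) x with h | h | h
  · simp [h.le, h.ne]
  · simp only [indicator_apply, mem_ofPred_eq, h, le_refl, if_true, mul_one]
    constructor <;> linarith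
  · simp [h.not_ge, h.ne']

lemma integral_modInd (hX : Measurable X)
    (hlt : P.real {ω | X ω < x} ≤ α) (hle : α ≤ P.real {ω | X ω ≤ x}) :
    ∫ ω, modInd P X α x ω ∂P = α := by
  obtain ⟨c, -, hc, h_eq⟩ := exists_modInd_eq_indicator_add hX hlt hle
  have h_le := measurableSet_le hX (measurable_const (a := x))
  have h_eq_x := measurableSet_eq_fun hX (measurable_const (a := x))
  simp_rw [h_eq]
  rw [integral_add ((integrable_const 1).indicator h_le)
      (((integrable_const 1).indicator h_eq_x).const_mul c),
    integral_indicator_const 1 h_le, integral_const_mul, integral_indicator_const 1 h_eq_x,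
    smul_eq_mul, smul_eq_mul, mul_one, mul_one, hc]
  ring

lemma integral_mul_modInd (hX : Measurable X) (hint : IntegrableOn X {ω | X ω ≤ x} P)
    (hlt : P.real {ω | X ω < x} ≤ α) (hle : α ≤ P.real {ω | X ω ≤ x}) :
    ∫ ω, X ω * modInd P X α x ω ∂P
      = ∫ ω in {ω | X ω ≤ x}, X ω ∂P + x * (α - P.real {ω | X ω ≤ x}) := by
  obtain ⟨c, -, hc, h_eq⟩ := exists_modInd_eq_indicator_add hX hlt hle
  have h_le := measurableSet_le hX (measurable_const (a := x))
  have h_eq_x := measurableSet_eq_fun hX (measurable_const (a := x))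
  have h_mul : ∀ ω, X ω * modInd P X α x ω =
      {ω | X ω ≤ x}.indicator X ω + (c * x) * {ω | X ω = x}.indicator (fun _ => 1) ω := by
    intro ω
    rw [h_eq ω]
    rcases lt_trichotomy (X ω) x with h | h | h
    · simp [h.le, h.ne]
    · simp only [indicator_apply, mem_ofPred_eq, h, le_refl, if_true]
      ring
    · simp [h.not_ge, h.ne']
  simp_rw [h_mul]
  rw [integral_add (hint.integrable_indicator h_le)
      (((integrable_const 1).indicator h_eq_x).const_mul _),
    integral_indicator h_le, integral_const_mul, integral_indicator_const 1 h_eq_x, smul_eq_mul,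
    mul_one]
  linear_combination x * hc

end ModifiedIndicator

/-- Properties of the modified indicator at the lower α-quantile. -/
theorem modInd_properties (P : Measure Ω) [IsProbabilityMeasure P] (α : ℝ)
    (hα : α ∈ Set.Ioo (0:ℝ) 1)
    (X : Ω → ℝ) (hX : Measurable X)
    (hXint : Integrable (fun ω => max (-(X ω)) 0) P) :
    (∀ ω, modInd P X α (lowerQuantile P X α) ω ∈ Set.Icc (0:ℝ) 1) ∧
    (∫ ω, modInd P X α (lowerQuantile P X α) ω ∂P) = α ∧
    α⁻¹ * (∫ ω, X ω * modInd P X α (lowerQuantile P X α) ω ∂P) = tailMean P X α := by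
  have hlt := measureReal_lt_lowerQuantile_le (P := P) hX hα.1
  have hle := le_measureReal_le_lowerQuantile (P := P) hX hα.2
  refine ⟨modInd_mem_Icc hX hlt hle, integral_modInd hX hlt hle, ?_⟩
  rw [integral_mul_modInd hX (integrableOn_setOf_le_of_integrable_negPart hX hXint _) hlt hle]
  rfl

end
end
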